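/- arXiv:1704.06496 — 6 statements merged into one kernel-verified Lean document; each statement's English description precedes it below -/
import Mathlib

section
/- M_r is differentiable at every point of ℝ^m, and for each j = 1,…,m its partial derivative with respect to t_j satisfies 0 ≤ ∂M_r/∂t_j ≤ 1 everywhere on ℝ^m. -/
open MeasureTheory

/-- The regularized maximum `M_r(t) = ∫_{ℝ^m} [max_j (t_j + r_j u_j)] ∏_j κ(u_j) du`. -/
noncomputable def regMax {m : ℕ} (κ : ℝ → ℝ) (r t : Fin m → ℝ) : ℝ :=
  ∫ u : Fin m → ℝ, (⨆ j, (t j + r j * u j)) * ∏ j, κ (u j)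

section aux

variable {m : ℕ} [NeZero m] (κ : ℝ → ℝ) (r : Fin m → ℝ)

/-- Integrability of the integrand. -/
lemma regMax_integrand_integrable (hκ_cont : Continuous κ)
    (hκ_supp : Function.support κ ⊆ Set.Ioo (-1 : ℝ) 1) (t : Fin m → ℝ) :
    Integrable (fun u : Fin m → ℝ => (⨆ j, (t j + r j * u j)) * ∏ j, κ (u j)) := by
  have hS : Continuous fun v : Fin m → ℝ => ⨆ j, v j := by
    have h : (fun v : Fin m → ℝ => ⨆ j, v j)
        = fun v => Finset.univ.sup' Finset.univ_nonempty (fun j => v j) := by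
      funext v; rw [Finset.sup'_univ_eq_ciSup]
    rw [h]
    exact Continuous.finset_sup'_apply _ fun i _ => continuous_apply i
  apply Continuous.integrable_of_hasCompactSupport
  · exact (hS.comp (continuous_pi fun j =>
      continuous_const.add (continuous_const.mul (continuous_apply j)))).mul
      (continuous_finset_prod _ fun j _ => hκ_cont.comp (continuous_apply j))
  · apply HasCompactSupport.intro (isCompact_univ_pi fun _ : Fin m => isCompact_Icc (a := (-1:ℝ)) (b := 1))
    intro u hu
    simp only [Set.mem_pi, Set.mem_univ, forall_true_left, not_forall] at hu
    obtain ⟨j, hj⟩ := hu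
    have : κ (u j) = 0 := by
      by_contra h
      exact hj (Set.Ioo_subset_Icc_self (hκ_supp h))
    rw [Finset.prod_eq_zero (Finset.mem_univ j) this, mul_zero]

end aux


section aux2

variable {m : ℕ} [NeZero m] (κ : ℝ → ℝ) (r : Fin m → ℝ)

/-- Change of variables: `regMax` is a convolution. -/
lemma regMax_eq_conv (hr : ∀ j, 0 < r j) :
    regMax κ r = convolution (fun v : Fin m → ℝ => ⨆ j, v j)
      (fun w : Fin m → ℝ => (∏ j, κ (-(w j) / r j)) * ∏ j, (r j)⁻¹)
      (ContinuousLinearMap.mul ℝ ℝ) volume := by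
  funext t
  set g : (Fin m → ℝ) → ℝ := fun u => (⨆ j, (t j + r j * u j)) * ∏ j, κ (u j) with hg
  set A : (Fin m → ℝ) →ₗ[ℝ] (Fin m → ℝ) :=
    Matrix.toLin' (Matrix.diagonal fun j => (r j)⁻¹) with hA
  set Ac : (Fin m → ℝ) →L[ℝ] (Fin m → ℝ) := LinearMap.toContinuousLinearMap A with hAc
  set φ : (Fin m → ℝ) → (Fin m → ℝ) := fun v j => (v j - t j) / r j with hφdef
  have hrne : ∀ j, r j ≠ 0 := fun j => (hr j).ne'
  have hAapp : ∀ v : Fin m → ℝ, Ac v = fun j => (r j)⁻¹ * v j := by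
    intro v; funext j
    simp [hAc, hA, Matrix.toLin'_apply, Matrix.mulVec_diagonal]
  have hφ : φ = fun v => Ac v - Ac t := by
    funext v j
    simp only [hφdef, Pi.sub_apply, hAapp]
    field_simp
  have hder : ∀ v ∈ Set.univ, HasFDerivWithinAt φ Ac Set.univ v := by
    intro v _
    rw [hφ]
    exact ((Ac.hasFDerivAt).sub_const (Ac t)).hasFDerivWithinAt
  have hinj : Set.InjOn φ Set.univ := by
    intro v _ w _ h
    funext j
    have h1 : (v j - t j) / r j = (w j - t j) / r j := congrFun h j
    have h2 : v j - t j = w j - t j :=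
      mul_right_cancel₀ (hrne j) ((div_eq_div_iff (hrne j) (hrne j)).mp h1)
    linarith
  have himg : φ '' Set.univ = Set.univ := by
    rw [Set.image_univ, Set.range_eq_univ]
    intro w
    refine ⟨fun j => t j + r j * w j, ?_⟩
    funext j
    simp only [hφdef]
    rw [add_sub_cancel_left, mul_div_cancel_left₀ _ (hrne j)]
  have hdet : |Ac.det| = ∏ j, (r j)⁻¹ := by
    have h1 : Ac.det = ∏ j, (r j)⁻¹ := by
      rw [hAc, ContinuousLinearMap.det, LinearMap.coe_toContinuousLinearMap, hA,
        LinearMap.det_toLin', Matrix.det_diagonal]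
    rw [h1, abs_of_pos (Finset.prod_pos fun j _ => inv_pos.mpr (hr j))]
  have hchange := integral_image_eq_integral_abs_det_fderiv_smul volume MeasurableSet.univ
    hder hinj g
  rw [himg] at hchange
  have : regMax κ r t = ∫ v : Fin m → ℝ, |Ac.det| • g (φ v) := by
    rw [regMax, ← setIntegral_univ (f := g), hchange, setIntegral_univ]
  rw [this, convolution_def]
  congr 1
  funext v
  have hsup : ∀ j, t j + r j * ((v j - t j) / r j) = v j := by
    intro j; rw [mul_comm (r j), div_mul_cancel₀ _ (hrne j)]; ring
  simp only [hg, hφdef, hdet, smul_eq_mul, ContinuousLinearMap.mul_apply', Pi.sub_apply]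
  have hprodeq : (∏ j, κ (-(t j - v j) / r j)) = ∏ j, κ ((v j - t j) / r j) := by
    apply Finset.prod_congr rfl
    intro j _
    rw [neg_sub]
  rw [hprodeq]
  simp only [hsup]
  ring


lemma regMax_contDiff (hκ_smooth : ContDiff ℝ ((⊤:ℕ∞) : WithTop ℕ∞) κ)
    (hκ_supp : Function.support κ ⊆ Set.Ioo (-1 : ℝ) 1) (hr : ∀ j, 0 < r j) :
    ContDiff ℝ ((⊤:ℕ∞) : WithTop ℕ∞) (regMax κ r) := by
  rw [regMax_eq_conv κ r hr]
  apply HasCompactSupport.contDiff_convolution_right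
  · -- compact support of the kernel
    apply HasCompactSupport.intro
      (isCompact_univ_pi fun j : Fin m => isCompact_Icc (a := -(r j)) (b := r j))
    intro w hw
    simp only [Set.mem_pi, Set.mem_univ, forall_true_left, not_forall] at hw
    obtain ⟨j, hj⟩ := hw
    have hz : κ (-(w j) / r j) = 0 := by
      by_contra h
      obtain ⟨h2a, h2b⟩ := hκ_supp h
      have hb1 : -(w j) < r j := (div_lt_one (hr j)).mp h2b
      have hb2 : -1 * r j < -(w j) := (lt_div_iff₀ (hr j)).mp h2a
      exact hj ⟨by linarith, by linarith⟩
    rw [Finset.prod_eq_zero (Finset.mem_univ j) hz, zero_mul]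
  · -- the sup function is locally integrable
    have hS : Continuous fun v : Fin m → ℝ => ⨆ j, v j := by
      have h : (fun v : Fin m → ℝ => ⨆ j, v j)
          = fun v => Finset.univ.sup' Finset.univ_nonempty (fun j => v j) := by
        funext v; rw [Finset.sup'_univ_eq_ciSup]
      rw [h]
      exact Continuous.finset_sup'_apply _ fun i _ => continuous_apply i
    exact hS.locallyIntegrable
  · -- the kernel is smooth
    apply ContDiff.mul _ contDiff_const
    apply contDiff_prod
    intro j _
    have h : (fun w : Fin m → ℝ => κ (-(w j) / r j)) = κ ∘ (fun w => w j * (-(r j)⁻¹)) := by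
      funext w
      simp only [Function.comp_apply]
      congr 1
      ring
    rw [h]
    exact hκ_smooth.comp
      (((ContinuousLinearMap.proj j : (Fin m → ℝ) →L[ℝ] ℝ).contDiff).mul contDiff_const)

end aux2



/-- `M_r` is differentiable and its partial derivatives lie in `[0,1]`. -/
theorem regMax_differentiable_and_partials_mem_Icc {m : ℕ} (hm : 0 < m) (κ : ℝ → ℝ)
    (hκ_smooth : ContDiff ℝ (⊤ : ℕ∞) κ) (hκ_nonneg : ∀ x, 0 ≤ κ x)
    (hκ_supp : Function.support κ ⊆ Set.Ioo (-1 : ℝ) 1)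
    (hκ_int : (∫ u : ℝ, κ u) = 1) (hκ_mom : (∫ u : ℝ, u * κ u) = 0)
    (r : Fin m → ℝ) (hr : ∀ j, 0 < r j) :
    Differentiable ℝ (regMax κ r) ∧
      ∀ (t : Fin m → ℝ) (j : Fin m),
        0 ≤ fderiv ℝ (regMax κ r) t (Pi.single j 1) ∧
          fderiv ℝ (regMax κ r) t (Pi.single j 1) ≤ 1 := by
  haveI : NeZero m := ⟨hm.ne'⟩
  have hsmooth : ContDiff ℝ ((⊤:ℕ∞) : WithTop ℕ∞) (regMax κ r) :=
    regMax_contDiff κ r (hκ_smooth.of_le (by simp)) hκ_supp hr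
  have hdiff : Differentiable ℝ (regMax κ r) := hsmooth.differentiable (by simp)
  refine ⟨hdiff, fun t j => ?_⟩
  set e : Fin m → ℝ := Pi.single j 1 with he
  have hint : ∀ t' : Fin m → ℝ,
      Integrable (fun u : Fin m → ℝ => (⨆ i, (t' i + r i * u i)) * ∏ i, κ (u i)) :=
    regMax_integrand_integrable κ r hκ_smooth.continuous hκ_supp
  have hprod_int : Integrable (fun u : Fin m → ℝ => ∏ i, κ (u i)) := by
    apply Continuous.integrable_of_hasCompactSupport
    · exact continuous_finset_prod _ fun i _ => hκ_smooth.continuous.comp (continuous_apply i)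
    · apply HasCompactSupport.intro
        (isCompact_univ_pi fun _ : Fin m => isCompact_Icc (a := (-1:ℝ)) (b := 1))
      intro u hu
      simp only [Set.mem_pi, Set.mem_univ, forall_true_left, not_forall] at hu
      obtain ⟨i, hi⟩ := hu
      have hz : κ (u i) = 0 := by
        by_contra h
        exact hi (Set.Ioo_subset_Icc_self (hκ_supp h))
      exact Finset.prod_eq_zero (Finset.mem_univ i) hz
  have hprod1 : (∫ u : Fin m → ℝ, ∏ i, κ (u i)) = 1 := by
    rw [volume_pi, MeasureTheory.integral_fintype_prod_eq_pow κ, hκ_int, one_pow]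
  have hprod_nonneg : ∀ u : Fin m → ℝ, 0 ≤ ∏ i, κ (u i) :=
    fun u => Finset.prod_nonneg fun i _ => hκ_nonneg _
  have hbdd : ∀ f : Fin m → ℝ, BddAbove (Set.range f) := fun f => (Set.finite_range f).bddAbove
  have hmono : ∀ s : ℝ, 0 ≤ s → regMax κ r t ≤ regMax κ r (t + s • e) := by
    intro s hs
    apply integral_mono (hint t) (hint _)
    intro u
    apply mul_le_mul_of_nonneg_right _ (hprod_nonneg u)
    apply ciSup_mono (hbdd _)
    intro i
    simp only [he, Pi.add_apply, Pi.smul_apply, smul_eq_mul, Pi.single_apply]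
    have h0 : (0:ℝ) ≤ s * (if i = j then (1:ℝ) else 0) := by
      split
      · simpa using hs
      · simp
    linarith
  have hlip : ∀ s : ℝ, 0 ≤ s → regMax κ r (t + s • e) ≤ regMax κ r t + s := by
    intro s hs
    have step : ∀ u : Fin m → ℝ,
        (⨆ i, ((t + s • e) i + r i * u i)) * ∏ i, κ (u i)
          ≤ (⨆ i, (t i + r i * u i)) * ∏ i, κ (u i) + s * ∏ i, κ (u i) := by
      intro u
      have h1 : (⨆ i, ((t + s • e) i + r i * u i))
          ≤ (⨆ i, (t i + r i * u i)) + s := by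
        apply ciSup_le
        intro i
        have h2 : (t + s • e) i + r i * u i ≤ (t i + r i * u i) + s := by
          simp only [he, Pi.add_apply, Pi.smul_apply, smul_eq_mul, Pi.single_apply]
          have h3 : s * (if i = j then (1:ℝ) else 0) ≤ s := by
            split
            · simp
            · simpa using hs
          linarith
        exact h2.trans (add_le_add_left (le_ciSup (f := fun i => t i + r i * u i) (hbdd _) i) s)
      calc (⨆ i, ((t + s • e) i + r i * u i)) * ∏ i, κ (u i)
          ≤ ((⨆ i, (t i + r i * u i)) + s) * ∏ i, κ (u i) :=
            mul_le_mul_of_nonneg_right h1 (hprod_nonneg u)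
        _ = (⨆ i, (t i + r i * u i)) * ∏ i, κ (u i) + s * ∏ i, κ (u i) := by ring
    calc regMax κ r (t + s • e)
        ≤ ∫ u : Fin m → ℝ, ((⨆ i, (t i + r i * u i)) * ∏ i, κ (u i) + s * ∏ i, κ (u i)) :=
          integral_mono (hint _) ((hint t).add (hprod_int.const_mul s)) step
      _ = regMax κ r t + s := by
          rw [integral_add (hint t) (hprod_int.const_mul s), integral_const_mul, hprod1,
            mul_one]
          rfl
  set D := fderiv ℝ (regMax κ r) t (e) with hD
  have hcurve : HasDerivAt (fun s : ℝ => t + s • e) (e) 0 := by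
    simpa using ((hasDerivAt_id (0:ℝ)).smul_const (e)).const_add t
  have hF : HasFDerivAt (regMax κ r) (fderiv ℝ (regMax κ r) t)
      (t + (0:ℝ) • e) := by
    simpa using (hdiff t).hasFDerivAt
  have hder : HasDerivAt (fun s : ℝ => regMax κ r (t + s • e)) D 0 :=
    by have := hF.comp_hasDerivAt 0 hcurve; exact this
  have hT : Filter.Tendsto (slope (fun s : ℝ => regMax κ r (t + s • e)) 0)
      (nhdsWithin 0 (Set.Ioi 0)) (nhds D) :=
    (hasDerivAt_iff_tendsto_slope.mp hder).mono_left
      (nhdsWithin_mono 0 fun x hx => ne_of_gt hx)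
  have hub : ∀ᶠ s in nhdsWithin (0:ℝ) (Set.Ioi 0),
      slope (fun s : ℝ => regMax κ r (t + s • e)) 0 s ∈ Set.Icc (0:ℝ) 1 := by
    filter_upwards [self_mem_nhdsWithin] with s hs
    have hs' : (0:ℝ) < s := hs
    rw [slope_def_field]
    have hzero : regMax κ r (t + (0:ℝ) • e) = regMax κ r t := by simp
    constructor
    · apply div_nonneg _ (by linarith : (0:ℝ) ≤ s - 0)
      rw [sub_nonneg, hzero]
      exact hmono s hs'.le
    · rw [div_le_one (by linarith : (0:ℝ) < s - 0), hzero]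
      have := hlip s hs'.le
      linarith
  exact ⟨ge_of_tendsto hT (hub.mono fun s h => h.1),
    le_of_tendsto hT (hub.mono fun s h => h.2)⟩
end

section
/- A dominated coordinate may be dropped: if t' = (t_0, t_1, …, t_m) ∈ ℝ^{m+1} and r' = (r_0, r_1, …, r_m) ∈ (ℝ_{>0})^{m+1} with t_0 + r_0 ≤ t_1 − r_1, then M_{r'}(t') = M_r(t), where r = (r_1,…,r_m) and t = (t_1,…,t_m). -/
open MeasureTheory

lemma ciSup_fin_succ_eq {m : ℕ} (hm : 0 < m) (f : Fin (m + 1) → ℝ)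
    (h : f 0 ≤ f (Fin.succ ⟨0, hm⟩)) : (⨆ j, f j) = ⨆ j : Fin m, f j.succ := by
  haveI : Nonempty (Fin m) := ⟨⟨0, hm⟩⟩
  have bdd1 : BddAbove (Set.range f) := (Set.finite_range f).bddAbove
  have bdd2 : BddAbove (Set.range fun j : Fin m => f j.succ) :=
    (Set.finite_range _).bddAbove
  apply le_antisymm
  · apply ciSup_le
    intro j
    induction j using Fin.cases with
    | zero => exact h.trans (le_ciSup bdd2 ⟨0, hm⟩)
    | succ i => exact le_ciSup bdd2 i
  · exact ciSup_le fun j => le_ciSup bdd1 j.succ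

/-- A dominated coordinate may be dropped: if `t_0 + r_0 ≤ t_1 - r_1`, then
`M_{(r_0,r_1,…,r_m)}(t_0,t_1,…,t_m) = M_{(r_1,…,r_m)}(t_1,…,t_m)`. -/
theorem regMax_cons_of_dominated {m : ℕ} (hm : 0 < m) (κ : ℝ → ℝ)
    (hκ_smooth : ContDiff ℝ (⊤ : ℕ∞) κ) (hκ_nonneg : ∀ x, 0 ≤ κ x)
    (hκ_supp : Function.support κ ⊆ Set.Ioo (-1 : ℝ) 1)
    (hκ_int : (∫ u : ℝ, κ u) = 1) (hκ_mom : (∫ u : ℝ, u * κ u) = 0)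
    (r t : Fin m → ℝ) (hr : ∀ j, 0 < r j) (r₀ t₀ : ℝ) (hr₀ : 0 < r₀)
    (hdom : t₀ + r₀ ≤ t ⟨0, hm⟩ - r ⟨0, hm⟩) :
    regMax κ (Fin.cons r₀ r) (Fin.cons t₀ t) = regMax κ r t := by
  classical
  set G : (Fin m → ℝ) → ℝ := fun v => (⨆ j, (t j + r j * v j)) * ∏ j, κ (v j) with hG
  have key : ∀ u : Fin (m + 1) → ℝ,
      (⨆ j, ((Fin.cons t₀ t : Fin (m + 1) → ℝ) j + (Fin.cons r₀ r : Fin (m + 1) → ℝ) j * u j))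
          * ∏ j, κ (u j)
        = κ (u 0) * G (fun j => u j.succ) := by
    intro u
    rw [Fin.prod_univ_succ]
    by_cases h0 : κ (u 0) = 0
    · simp [h0, Fin.cases_zero]
    by_cases h1 : κ (u (Fin.succ ⟨0, hm⟩)) = 0
    · have hz : (∏ j : Fin m, κ (u j.succ)) = 0 :=
        Finset.prod_eq_zero (Finset.mem_univ ⟨0, hm⟩) h1
      rw [hG]
      simp only [hz]
      ring
    · have hu0 := hκ_supp h0
      have hu1 := hκ_supp h1
      have hsup : (⨆ j, ((Fin.cons t₀ t : Fin (m + 1) → ℝ) j + (Fin.cons r₀ r : Fin (m + 1) → ℝ) j * u j))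
          = ⨆ j : Fin m, (t j + r j * u j.succ) := by
        have hineq :
            (fun j : Fin (m + 1) => (Fin.cons t₀ t : Fin (m + 1) → ℝ) j + (Fin.cons r₀ r : Fin (m + 1) → ℝ) j * u j) 0
              ≤ (fun j : Fin (m + 1) => (Fin.cons t₀ t : Fin (m + 1) → ℝ) j + (Fin.cons r₀ r : Fin (m + 1) → ℝ) j * u j)
                (Fin.succ ⟨0, hm⟩) := by
          simp only [Fin.cons_zero, Fin.cons_succ]
          nlinarith [hu0.1, hu0.2, hu1.1, hu1.2, hr ⟨0, hm⟩, hr₀]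
        have := ciSup_fin_succ_eq hm
          (fun j : Fin (m + 1) => (Fin.cons t₀ t : Fin (m + 1) → ℝ) j + (Fin.cons r₀ r : Fin (m + 1) → ℝ) j * u j) hineq
        simpa [Fin.cons_succ] using this
      rw [hsup, hG]
      ring
  have mp := volume_preserving_piFinSuccAbove (fun _ : Fin (m + 1) => ℝ) 0
  have emb := (MeasurableEquiv.piFinSuccAbove (fun _ : Fin (m + 1) => ℝ) 0).measurableEmbedding
  calc regMax κ (Fin.cons r₀ r) (Fin.cons t₀ t)
      = ∫ u : Fin (m + 1) → ℝ, κ (u 0) * G (fun j => u j.succ) := by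
        unfold regMax; exact integral_congr_ae (Filter.Eventually.of_forall key)
    _ = ∫ p : ℝ × (Fin m → ℝ), κ p.1 * G p.2 := by
        rw [← mp.integral_comp emb (fun p : ℝ × (Fin m → ℝ) => κ p.1 * G p.2)]
        apply integral_congr_ae
        filter_upwards with u
        have : (MeasurableEquiv.piFinSuccAbove (fun _ : Fin (m + 1) => ℝ) 0) u
            = (u 0, Fin.tail u) := by
          simp [MeasurableEquiv.piFinSuccAbove, Fin.removeNth]
        rw [this]
        rfl
    _ = (∫ x : ℝ, κ x) * ∫ v : Fin m → ℝ, G v := integral_prod_mul κ G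
    _ = regMax κ r t := by rw [hκ_int, one_mul]; rfl
  done
end

section
/- Given an ends decomposition M \ K = E_1 ∪ ⋯ ∪ E_m, there exists a connected compact set K' ⊆ M with K ⊆ K' such that for every domain Θ in M containing K', the sets E_j' = E_j ∩ Θ (j = 1,…,m) are exactly the distinct connected components of Θ \ K, each E_j' has noncompact closure in Θ, and hence Θ \ K = E_1' ∪ ⋯ ∪ E_m' is an ends decomposition for Θ. -/
/-!
Choose an open neighbourhood `U` of `K` with compact closure and, inside each end `E j`, a compact
connected set `G j` containing the compact piece `frontier U ∩ E j`; let `K'` be a compact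
connected set containing `closure U` and all `G j`. If `Θ ⊇ K'` is a domain, a component `C` of
`Θ \ K` lying in `E j` either has closure meeting `K`, or is clopen in `Θ` and hence all of `Θ`.
In the first case `C` meets `U \ K`, and the component of `U \ K` it meets cannot stay inside `U`
(it would then swallow `E j`, whose closure is not compact), so `C` reaches `frontier U ∩ E j`.
Either way `C` meets the connected set `G j`, so `E j ∩ Θ` is a single component of `Θ \ K`.
-/

open Set

/-- An *end* of a topological space `M`: a connected component with noncompact closure
of the complement of some compact set. -/
def IsEnd {M : Type*} [TopologicalSpace M] (E : Set M) : Prop :=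
  ∃ K : Set M, IsCompact K ∧ (∃ x ∈ Kᶜ, E = connectedComponentIn Kᶜ x) ∧
    ¬ IsCompact (closure E)

/-- A *domain* in `M`: a nonempty connected open subset. -/
def IsDomainSet {M : Type*} [TopologicalSpace M] (Ω : Set M) : Prop :=
  IsOpen Ω ∧ IsConnected Ω

/-- `M \ K = E 0 ∪ ⋯ ∪ E (m-1)` is an *ends decomposition*: `K` is compact and the `E j`
are the distinct connected components of `M \ K`, each with noncompact closure. -/
def IsEndsDecomposition {M : Type*} [TopologicalSpace M] (K : Set M)
    {m : ℕ} (E : Fin m → Set M) : Prop :=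
  IsCompact K ∧ Function.Injective E ∧
    (∀ j, (∃ x ∈ Kᶜ, E j = connectedComponentIn Kᶜ x) ∧ ¬ IsCompact (closure (E j))) ∧
    (⋃ j, E j) = Kᶜ

open Filter Topology

section General

variable {X : Type*} [TopologicalSpace X]

theorem IsOpen.closure_connectedComponentIn_inter [LocallyConnectedSpace X] {F : Set X}
    (hF : IsOpen F) (x : X) :
    closure (connectedComponentIn F x) ∩ F = connectedComponentIn F x := by
  refine Subset.antisymm (fun q ⟨hqC, hqF⟩ => ?_)
    (subset_inter subset_closure (connectedComponentIn_subset F x))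
  obtain ⟨y, hyq, hyx⟩ :=
    mem_closure_iff.mp hqC _ hF.connectedComponentIn (mem_connectedComponentIn hqF)
  rw [connectedComponentIn_eq hyx, ← connectedComponentIn_eq hyq]
  exact mem_connectedComponentIn hqF

theorem exists_isCompact_isConnected_between [T2Space X] [LocallyCompactSpace X]
    [LocallyPathConnectedSpace X] {D W : Set X} (hD : IsCompact D) (hW : IsOpen W)
    (hWc : IsConnected W) (hDW : D ⊆ W) :
    ∃ G, IsCompact G ∧ IsConnected G ∧ D ⊆ G ∧ G ⊆ W := by
  obtain ⟨w, hw⟩ := hWc.nonempty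
  obtain ⟨L, hLc, hDL, hLW⟩ := exists_compact_between hD hW hDW
  have hQ : ∀ x ∈ D, ∃ Q ∈ 𝓝 x, IsCompact Q ∧ IsPreconnected Q ∧ w ∈ Q ∧ Q ⊆ W := by
    intro x hx
    obtain ⟨γ, hγW⟩ :=
      (hW.isConnected_iff_isPathConnected.mp hWc).joinedIn x (hDW hx) w hw
    have hxV : x ∈ connectedComponentIn (interior L) x := mem_connectedComponentIn (hDL hx)
    have hVL : closure (connectedComponentIn (interior L) x) ⊆ L :=
      closure_minimal ((connectedComponentIn_subset _ _).trans interior_subset) hLc.isClosed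
    refine ⟨closure (connectedComponentIn (interior L) x) ∪ range γ,
      mem_of_superset (connectedComponentIn_mem_nhds (isOpen_interior.mem_nhds (hDL hx)))
        (subset_closure.trans subset_union_left),
      (hLc.of_isClosed_subset isClosed_closure hVL).union (isCompact_range γ.continuous),
      isPreconnected_connectedComponentIn.closure.union x (subset_closure hxV) ⟨0, γ.source⟩
        (isConnected_range γ.continuous).isPreconnected,
      Or.inr ⟨1, γ.target⟩, union_subset (hVL.trans hLW) (range_subset_iff.mpr hγW)⟩
  choose! Q hQx hQc hQconn hwQ hQW using hQ
  obtain ⟨t, htD, hDt⟩ := hD.elim_nhds_subcover Q hQx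
  refine ⟨insert w (⋃ x ∈ t, Q x),
    (t.finite_toSet.isCompact_biUnion fun x hx => hQc x (htD x hx)).insert w,
    ⟨insert_nonempty _ _, isPreconnected_of_forall w ?_⟩, hDt.trans (subset_insert _ _),
    insert_subset hw (iUnion₂_subset fun x hx => hQW x (htD x hx))⟩
  rintro y (rfl | hy)
  · exact ⟨{y}, singleton_subset_iff.mpr (mem_insert _ _), rfl, rfl, isPreconnected_singleton⟩
  · obtain ⟨x, hx, hyx⟩ := mem_iUnion₂.mp hy
    exact ⟨Q x, (subset_biUnion_of_mem hx).trans (subset_insert _ _), hwQ x (htD x hx), hyx,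
      hQconn x (htD x hx)⟩

theorem closure_connectedComponentIn_inter_frontier_nonempty [LocallyConnectedSpace X]
    {F U : Set X} (hF : IsOpen F) (hU : IsOpen U) (hUc : IsCompact (closure U)) {x : X}
    (hx : x ∈ U ∩ F) (hE : ¬ IsCompact (closure (connectedComponentIn F x))) :
    (closure (connectedComponentIn (U ∩ F) x) ∩ frontier U).Nonempty := by
  by_contra hfr
  have hC₀U : closure (connectedComponentIn (U ∩ F) x) ⊆ U := fun y hy => by
    by_contra hyU
    have hyU' : y ∈ closure U :=
      closure_mono ((connectedComponentIn_subset _ _).trans inter_subset_left) hy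
    exact hfr ⟨y, hy, hU.frontier_eq ▸ ⟨hyU', hyU⟩⟩
  have hEC₀ : connectedComponentIn F x ⊆ connectedComponentIn (U ∩ F) x :=
    isPreconnected_connectedComponentIn.subset_of_closure_inter_subset
      (hU.inter hF).connectedComponentIn
      ⟨x, mem_connectedComponentIn hx.2, mem_connectedComponentIn hx⟩ fun y hy =>
        (hU.inter hF).closure_connectedComponentIn_inter x ▸
          ⟨hy.1, hC₀U hy.1, connectedComponentIn_subset _ _ hy.2⟩
  exact hE (hUc.of_isClosed_subset isClosed_closure
    ((closure_mono hEC₀).trans (hC₀U.trans subset_closure)))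

theorem subset_connectedComponentIn_diff_of_disjoint [LocallyConnectedSpace X] {Θ K : Set X}
    (hΘc : IsPreconnected Θ) (hΘ : IsOpen Θ) (hK : IsClosed K) {x : X} (hx : x ∈ Θ \ K)
    (hCK : Disjoint (closure (connectedComponentIn (Θ \ K) x)) K) :
    Θ ⊆ connectedComponentIn (Θ \ K) x :=
  hΘc.subset_of_closure_inter_subset (hΘ.sdiff hK).connectedComponentIn
    ⟨x, hx.1, mem_connectedComponentIn hx⟩ fun _ hy =>
      (hΘ.sdiff hK).closure_connectedComponentIn_inter x ▸ ⟨hy.1, hy.2, hCK.notMem_of_mem_left hy.1⟩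

theorem connectedComponentIn_diff_inter_nonempty [LocallyConnectedSpace X]
    {K U Θ G : Set X} (hK : IsClosed K) (hU : IsOpen U) (hUc : IsCompact (closure U))
    (hKU : K ⊆ U) (hΘ : IsOpen Θ) (hΘc : IsPreconnected Θ) (hUΘ : closure U ⊆ Θ) {p : X}
    (hp : p ∈ Θ \ K) (hEp : ¬ IsCompact (closure (connectedComponentIn Kᶜ p)))
    (hGΘ : G ⊆ Θ) (hGne : G.Nonempty) (hUG : frontier U ∩ connectedComponentIn Kᶜ p ⊆ G) :
    (connectedComponentIn (Θ \ K) p ∩ G).Nonempty := by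
  by_cases hCK : Disjoint (closure (connectedComponentIn (Θ \ K) p)) K
  · obtain ⟨g, hg⟩ := hGne
    exact ⟨g, subset_connectedComponentIn_diff_of_disjoint hΘc hΘ hK hp hCK (hGΘ hg), hg⟩
  obtain ⟨k, hkC, hkK⟩ := not_disjoint_iff.mp hCK
  obtain ⟨q, hqU, hqC⟩ := mem_closure_iff.mp hkC U hU (hKU hkK)
  have hqK : q ∉ K := (connectedComponentIn_subset _ _ hqC).2
  have hCq := connectedComponentIn_eq hqC
  have hEq := connectedComponentIn_eq (connectedComponentIn_mono p (sdiff_subset_compl Θ K) hqC)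
  obtain ⟨z, hzC₀, hzU⟩ := closure_connectedComponentIn_inter_frontier_nonempty hK.isOpen_compl
    hU hUc ⟨hqU, hqK⟩ (hEq ▸ hEp)
  have hzK : z ∉ K := fun h => (hU.frontier_eq ▸ hzU).2 (hKU h)
  have hC₀C : connectedComponentIn (U ∩ Kᶜ) q ⊆ connectedComponentIn (Θ \ K) p :=
    hCq ▸ connectedComponentIn_mono q fun y hy => ⟨hUΘ (subset_closure hy.1), hy.2⟩
  have hC₀E : connectedComponentIn (U ∩ Kᶜ) q ⊆ connectedComponentIn Kᶜ p :=
    hEq ▸ connectedComponentIn_mono q inter_subset_right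
  have hzE : z ∈ connectedComponentIn Kᶜ p :=
    hK.isOpen_compl.closure_connectedComponentIn_inter p ▸ ⟨closure_mono hC₀E hzC₀, hzK⟩
  refine ⟨z, ?_, hUG ⟨hzU, hzE⟩⟩
  exact (hΘ.sdiff hK).closure_connectedComponentIn_inter p ▸
    ⟨closure_mono hC₀C hzC₀, hUΘ (frontier_subset_closure hzU), hzK⟩

theorem IsPreconnected.not_isCompact_closure_inter_inter [T2Space X] {E Θ : Set X}
    (hE : IsPreconnected E) (hEo : IsOpen E) (hΘ : IsOpen Θ) (hne : (E ∩ Θ).Nonempty)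
    (hcl : ¬ IsCompact (closure E)) : ¬ IsCompact (closure (E ∩ Θ) ∩ Θ) := by
  intro hc
  have hsub : closure (E ∩ Θ) ⊆ Θ :=
    (closure_minimal (subset_inter subset_closure inter_subset_right) hc.isClosed).trans
      inter_subset_right
  have hEΘ : E ⊆ E ∩ Θ :=
    hE.subset_of_closure_inter_subset (hEo.inter hΘ) (by rwa [← inter_assoc, inter_self])
      fun y hy => ⟨hy.2, hsub hy.1⟩
  exact hcl (hc.of_isClosed_subset isClosed_closure
    (subset_inter (closure_mono hEΘ) ((closure_mono hEΘ).trans hsub)))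

end General

namespace IsEndsDecomposition

variable {X : Type*} [TopologicalSpace X] {K : Set X} {m : ℕ} {E : Fin m → Set X}

theorem eq_connectedComponentIn (hE : IsEndsDecomposition K E) {j : Fin m} {p : X}
    (hp : p ∈ E j) : E j = connectedComponentIn Kᶜ p := by
  obtain ⟨x, -, hEx⟩ := (hE.2.2.1 j).1
  rw [hEx] at hp ⊢
  exact connectedComponentIn_eq hp

theorem eq_of_mem (hE : IsEndsDecomposition K E) {j k : Fin m} {p : X} (hj : p ∈ E j)
    (hk : p ∈ E k) : j = k :=
  hE.2.1 ((hE.eq_connectedComponentIn hj).trans (hE.eq_connectedComponentIn hk).symm)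

theorem subset_compl (hE : IsEndsDecomposition K E) (j : Fin m) : E j ⊆ Kᶜ :=
  hE.2.2.2 ▸ subset_iUnion E j

theorem not_isCompact_closure (hE : IsEndsDecomposition K E) (j : Fin m) :
    ¬ IsCompact (closure (E j)) :=
  (hE.2.2.1 j).2

theorem isConnected (hE : IsEndsDecomposition K E) (j : Fin m) : IsConnected (E j) := by
  obtain ⟨x, hx, hEx⟩ := (hE.2.2.1 j).1
  exact hEx ▸ isConnected_connectedComponentIn_iff.mpr hx

variable [T2Space X] [LocallyConnectedSpace X]

theorem isOpen (hE : IsEndsDecomposition K E) (j : Fin m) : IsOpen (E j) := by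
  obtain ⟨x, -, hEx⟩ := (hE.2.2.1 j).1
  exact hEx ▸ hE.1.isClosed.isOpen_compl.connectedComponentIn

theorem isCompact_inter (hE : IsEndsDecomposition K E) {C : Set X} (hC : IsCompact C)
    (hCK : Disjoint C K) (j : Fin m) : IsCompact (C ∩ E j) := by
  obtain ⟨x, -, hEx⟩ := (hE.2.2.1 j).1
  have hcl : closure (E j) ∩ Kᶜ = E j :=
    hEx ▸ hE.1.isClosed.isOpen_compl.closure_connectedComponentIn_inter x
  have hCE : C ∩ E j = C ∩ closure (E j) :=
    Subset.antisymm (inter_subset_inter_right _ subset_closure) fun y hy =>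
      ⟨hy.1, hcl.subset ⟨hy.2, hCK.notMem_of_mem_left hy.1⟩⟩
  exact hCE ▸ hC.inter_right isClosed_closure

theorem inter_eq_connectedComponentIn_diff (hE : IsEndsDecomposition K E) {U Θ G : Set X}
    (hU : IsOpen U) (hUc : IsCompact (closure U)) (hKU : K ⊆ U) (hΘ : IsOpen Θ)
    (hΘc : IsPreconnected Θ) (hUΘ : closure U ⊆ Θ) {j : Fin m} (hGc : IsPreconnected G)
    (hGE : G ⊆ E j) (hGΘ : G ⊆ Θ) (hUG : frontier U ∩ E j ⊆ G) {x : X} (hx : x ∈ G) :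
    E j ∩ Θ = connectedComponentIn (Θ \ K) x := by
  have hGΘK : G ⊆ Θ \ K := fun y hy => ⟨hGΘ hy, hE.subset_compl j (hGE hy)⟩
  refine Subset.antisymm (fun p hp => ?_) ?_
  · have hpE := hE.eq_connectedComponentIn hp.1
    have hpΘK : p ∈ Θ \ K := ⟨hp.2, hE.subset_compl j hp.1⟩
    obtain ⟨g, hgp, hgG⟩ := connectedComponentIn_diff_inter_nonempty hE.1.isClosed hU hUc hKU
      hΘ hΘc hUΘ hpΘK (hpE ▸ hE.not_isCompact_closure j) hGΘ ⟨x, hx⟩ (hpE ▸ hUG)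
    have hgx : g ∈ connectedComponentIn (Θ \ K) x := hGc.subset_connectedComponentIn hx hGΘK hgG
    rw [connectedComponentIn_eq hgx, ← connectedComponentIn_eq hgp]
    exact mem_connectedComponentIn hpΘK
  · rw [hE.eq_connectedComponentIn (hGE hx)]
    exact subset_inter (connectedComponentIn_mono x (sdiff_subset_compl Θ K))
      ((connectedComponentIn_subset _ _).trans sdiff_subset)

end IsEndsDecomposition

theorem ends_decomposition_restricts_to_domains_general
    {n : ℕ} {M : Type*} [TopologicalSpace M]
    [ChartedSpace (EuclideanSpace ℝ (Fin n)) M]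
    [T2Space M] [ConnectedSpace M]
    (K : Set M) {m : ℕ} (E : Fin m → Set M) (hE : IsEndsDecomposition K E) :
    ∃ K' : Set M, IsCompact K' ∧ IsConnected K' ∧ K ⊆ K' ∧
      ∀ Θ : Set M, IsDomainSet Θ → K' ⊆ Θ →
        Function.Injective (fun j => E j ∩ Θ) ∧
        (∀ j, (∃ x ∈ Θ \ K, E j ∩ Θ = connectedComponentIn (Θ \ K) x) ∧
          ¬ IsCompact (closure (E j ∩ Θ) ∩ Θ)) ∧
        (⋃ j, E j ∩ Θ) = Θ \ K := by
  have := ChartedSpace.locallyCompactSpace (EuclideanSpace ℝ (Fin n)) M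
  have := ChartedSpace.locallyPathConnectedSpace (EuclideanSpace ℝ (Fin n)) M
  obtain ⟨U, hU, hKU, hUc⟩ := exists_isOpen_superset_and_isCompact_closure hE.1
  have hfrK : Disjoint (frontier U) K := hU.frontier_eq ▸ disjoint_sdiff_left.mono_right hKU
  choose G hGc hGconn hUG hGE using fun j => exists_isCompact_isConnected_between
    (hE.isCompact_inter (hUc.of_isClosed_subset isClosed_frontier frontier_subset_closure) hfrK j)
    (hE.isOpen j) (hE.isConnected j) inter_subset_right
  obtain ⟨K', hK'c, hK'conn, hK', -⟩ := exists_isCompact_isConnected_between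
    (hUc.union (isCompact_iUnion hGc)) isOpen_univ isConnected_univ (subset_univ _)
  have hUK' : closure U ⊆ K' := subset_union_left.trans hK'
  have hGK' : ∀ j, G j ⊆ K' := fun j => (subset_iUnion G j).trans (subset_union_right.trans hK')
  refine ⟨K', hK'c, hK'conn, hKU.trans (subset_closure.trans hUK'), fun Θ ⟨hΘ, hΘc⟩ hK'Θ => ?_⟩
  choose x hx using fun j => (hGconn j).nonempty
  have hxE : ∀ j, x j ∈ E j ∩ Θ := fun j => ⟨hGE j (hx j), hK'Θ (hGK' j (hx j))⟩
  have hEΘ : ∀ j, E j ∩ Θ = connectedComponentIn (Θ \ K) (x j) := fun j =>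
    hE.inter_eq_connectedComponentIn_diff hU hUc hKU hΘ hΘc.isPreconnected (hUK'.trans hK'Θ)
      (hGconn j).isPreconnected (hGE j) ((hGK' j).trans hK'Θ) (hUG j) (hx j)
  refine ⟨fun j k hjk => hE.eq_of_mem (hxE j).1 ((show E j ∩ Θ = E k ∩ Θ from hjk) ▸ hxE j).1,
    fun j => ⟨⟨x j, ⟨(hxE j).2, hE.subset_compl j (hxE j).1⟩, hEΘ j⟩, ?_⟩, ?_⟩
  · exact (hE.isConnected j).isPreconnected.not_isCompact_closure_inter_inter (hE.isOpen j) hΘ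
      ⟨x j, hxE j⟩ (hE.not_isCompact_closure j)
  · rw [← iUnion_inter, hE.2.2.2, sdiff_eq, inter_comm]

/-- Given an ends decomposition `M \ K = E 0 ∪ ⋯ ∪ E (m-1)` of a connected noncompact
smooth manifold, there is a connected compact set `K' ⊇ K` such that for every domain
`Θ ⊇ K'`, the sets `E j ∩ Θ` are exactly the distinct connected components of `Θ \ K`,
each with noncompact closure in `Θ`; i.e., they give an ends decomposition of `Θ`. -/
theorem ends_decomposition_restricts_to_domains
    {n : ℕ} {M : Type*} [TopologicalSpace M]
    [ChartedSpace (EuclideanSpace ℝ (Fin n)) M]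
    [IsManifold (modelWithCornersSelf ℝ (EuclideanSpace ℝ (Fin n))) ((⊤ : ℕ∞) : WithTop ℕ∞) M]
    [T2Space M] [SecondCountableTopology M] [ConnectedSpace M] [NoncompactSpace M]
    (K : Set M) {m : ℕ} (E : Fin m → Set M) (hE : IsEndsDecomposition K E) :
    ∃ K' : Set M, IsCompact K' ∧ IsConnected K' ∧ K ⊆ K' ∧
      ∀ Θ : Set M, IsDomainSet Θ → K' ⊆ Θ →
        Function.Injective (fun j => E j ∩ Θ) ∧
        (∀ j, (∃ x ∈ Θ \ K, E j ∩ Θ = connectedComponentIn (Θ \ K) x) ∧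
          ¬ IsCompact (closure (E j ∩ Θ) ∩ Θ)) ∧
        (⋃ j, E j ∩ Θ) = Θ \ K :=
  ends_decomposition_restricts_to_domains_general (n := n) K E hE
end

section
/- If Ω and Θ are domains in M with Θ ⊆ Ω, no connected component of M \ Ω is compact, and no connected component of Ω \ Θ is compact, then no connected component of M \ Θ is compact. -/
/-! Write `Θᶜ = Ωᶜ ∪ (Ω \ Θ)` with `Ωᶜ` closed and let the component `C` of `Θᶜ` through `x` be
compact; `C` is closed, like every component of a closed set. If `x ∈ Ωᶜ`, the `Ωᶜ`-component of `x`
is a closed subset of `C`, hence compact. Otherwise the `(Ω \ Θ)`-component `D` of `x` either has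
its closure inside `Ω \ Θ`, and is then a closed subset of `C`, or has a limit point `y ∈ Ωᶜ ∩ C`,
whose `Ωᶜ`-component then lies in `C`. -/

open Set

section ConnectedComponentIn

variable {X : Type*} [TopologicalSpace X]

theorem isClosed_connectedComponentIn_of_closure_subset {s : Set X} {x : X}
    (h : closure (connectedComponentIn s x) ⊆ s) : IsClosed (connectedComponentIn s x) := by
  by_cases hx : x ∈ s
  · exact isClosed_of_closure_subset <|
      isPreconnected_connectedComponentIn.closure.subset_connectedComponentIn
        (subset_closure (mem_connectedComponentIn hx)) h
  · rw [connectedComponentIn_eq_empty hx]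
    exact isClosed_empty

theorem IsClosed.connectedComponentIn {s : Set X} (hs : IsClosed s) (x : X) :
    IsClosed (connectedComponentIn s x) :=
  isClosed_connectedComponentIn_of_closure_subset <|
    closure_minimal (connectedComponentIn_subset s x) hs

theorem IsCompact.connectedComponentIn_of_subset {s t : Set X} {x y : X}
    (hC : IsCompact (connectedComponentIn t x)) (hs : IsClosed s) (hst : s ⊆ t)
    (hy : y ∈ connectedComponentIn t x) : IsCompact (connectedComponentIn s y) := by
  refine hC.of_isClosed_subset (hs.connectedComponentIn y) ?_
  rw [connectedComponentIn_eq hy]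
  exact connectedComponentIn_mono y hst

theorem not_isCompact_connectedComponentIn_of_diff {F A : Set X} (hF : IsClosed F)
    (hA : IsClosed A) (hAF : A ⊆ F)
    (hA_comp : ∀ x ∈ A, ¬ IsCompact (connectedComponentIn A x))
    (hFA_comp : ∀ x ∈ F \ A, ¬ IsCompact (connectedComponentIn (F \ A) x)) :
    ∀ x ∈ F, ¬ IsCompact (connectedComponentIn F x) := by
  intro x hxF hC
  by_cases hxA : x ∈ A
  · exact hA_comp x hxA (hC.connectedComponentIn_of_subset hA hAF (mem_connectedComponentIn hxF))
  have hxFA : x ∈ F \ A := ⟨hxF, hxA⟩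
  have hDC : connectedComponentIn (F \ A) x ⊆ connectedComponentIn F x :=
    connectedComponentIn_mono x sdiff_subset
  by_cases hcl : closure (connectedComponentIn (F \ A) x) ⊆ F \ A
  · exact hFA_comp x hxFA
      (hC.of_isClosed_subset (isClosed_connectedComponentIn_of_closure_subset hcl) hDC)
  obtain ⟨y, hy_cl, hy_FA⟩ := not_subset.mp hcl
  have hyC : y ∈ connectedComponentIn F x :=
    closure_minimal hDC (hF.connectedComponentIn x) hy_cl
  have hyA : y ∈ A := by
    by_contra hyA
    exact hy_FA ⟨connectedComponentIn_subset F x hyC, hyA⟩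
  exact hA_comp y hyA (hC.connectedComponentIn_of_subset hA hAF hyC)

end ConnectedComponentIn

theorem no_compact_components_of_complement_general
    {M : Type*} [TopologicalSpace M]
    (Ω Θ : Set M) (hΩ : IsDomainSet Ω) (hΘ : IsDomainSet Θ) (hsub : Θ ⊆ Ω)
    (h₁ : ∀ x ∈ Ωᶜ, ¬ IsCompact (connectedComponentIn Ωᶜ x))
    (h₂ : ∀ x ∈ Ω \ Θ, ¬ IsCompact (connectedComponentIn (Ω \ Θ) x)) :
    ∀ x ∈ Θᶜ, ¬ IsCompact (connectedComponentIn Θᶜ x) :=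
  not_isCompact_connectedComponentIn_of_diff hΘ.1.isClosed_compl hΩ.1.isClosed_compl
    (compl_subset_compl.mpr hsub) h₁ (by rwa [compl_sdiff_compl])

/-- If `Θ ⊆ Ω` are domains in `M`, no connected component of `M \ Ω` is compact, and no
connected component of `Ω \ Θ` is compact, then no connected component of `M \ Θ` is
compact. -/
theorem no_compact_components_of_complement
    {n : ℕ} {M : Type*} [TopologicalSpace M]
    [ChartedSpace (EuclideanSpace ℝ (Fin n)) M]
    [IsManifold (modelWithCornersSelf ℝ (EuclideanSpace ℝ (Fin n))) (⊤ : ℕ∞) M]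
    [T2Space M] [SecondCountableTopology M] [ConnectedSpace M] [NoncompactSpace M]
    (Ω Θ : Set M) (hΩ : IsDomainSet Ω) (hΘ : IsDomainSet Θ) (hsub : Θ ⊆ Ω)
    (h₁ : ∀ x ∈ Ωᶜ, ¬ IsCompact (connectedComponentIn Ωᶜ x))
    (h₂ : ∀ x ∈ Ω \ Θ, ¬ IsCompact (connectedComponentIn (Ω \ Θ) x)) :
    ∀ x ∈ Θᶜ, ¬ IsCompact (connectedComponentIn Θᶜ x) :=
  no_compact_components_of_complement_general Ω Θ hΩ hΘ hsub h₁ h₂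
end

section
/- If E is an end of M, then there exists an end A_0 of M such that the closure of A_0 is contained in E and E \ A_0 is relatively compact in M (i.e., its closure in M is compact). -/
open Set

/-!
Let `E` be the component of `Kᶜ` through `x`, and fix a compact neighbourhood `K'` of `K ∪ {x}`. By
connectedness of `M`, every component of `K'ᶜ` that leaves a compact neighbourhood `L` of `K'` meets
the compact set `frontier L`, so only finitely many components of `K'ᶜ` are not contained in `L`.
The ones lying in `E` are tied together with `x` by a compact connected set `P ⊆ E` (a union of
paths), and removing from `K'` the interior of a compact neighbourhood `Lc ⊆ E` of `P` leaves a
compact set whose complement has a single component `A₀` through `x` containing all of them.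
Then `E \ A₀ ⊆ K' ∪ L`, and `closure A₀` stays inside `Lc ∪ (interior K')ᶜ ⊆ Kᶜ`, hence inside `E`
(the part of `closure E` in the open set `Kᶜ` is `E`, by local connectedness).
-/

section

variable {X : Type*} [TopologicalSpace X]

theorem closure_connectedComponentIn_inter_subset [LocallyConnectedSpace X] {F : Set X}
    (hF : IsOpen F) (x : X) :
    closure (connectedComponentIn F x) ∩ F ⊆ connectedComponentIn F x := by
  rintro y ⟨hy, hyF⟩
  obtain ⟨z, hzy, hzx⟩ :=
    mem_closure_iff.mp hy _ hF.connectedComponentIn (mem_connectedComponentIn hyF)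
  rw [connectedComponentIn_eq hzx, ← connectedComponentIn_eq hzy]
  exact mem_connectedComponentIn hyF

theorem connectedComponentIn_subset_of_mem {F G : Set X} (hFG : F ⊆ G) {x y : X}
    (hy : y ∈ connectedComponentIn G x) : connectedComponentIn F y ⊆ connectedComponentIn G x :=
  connectedComponentIn_eq hy ▸ connectedComponentIn_mono y hFG

theorem closure_connectedComponentIn_compl_sdiff_subset [LocallyConnectedSpace X]
    {K K' Lc : Set X} (hK : IsClosed K) (hKK' : K ⊆ interior K') (hLc : IsClosed Lc) {x : X}
    (hLcE : Lc ⊆ connectedComponentIn Kᶜ x) :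
    closure (connectedComponentIn (K' \ interior Lc)ᶜ x) ⊆ connectedComponentIn Kᶜ x := by
  set A := connectedComponentIn (K' \ interior Lc)ᶜ x
  have hK'K : K'ᶜ ⊆ Kᶜ := compl_subset_compl.mpr (hKK'.trans interior_subset)
  have hAK : closure A ⊆ Kᶜ := calc
    closure A ⊆ closure (interior Lc ∪ K'ᶜ) :=
      closure_mono (compl_sdiff ▸ connectedComponentIn_subset _ _)
    _ = closure (interior Lc) ∪ (interior K')ᶜ := by rw [closure_union, closure_compl]
    _ ⊆ Lc ∪ (interior K')ᶜ :=
      union_subset_union_left _ (closure_minimal interior_subset hLc)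
    _ ⊆ Kᶜ := union_subset (hLcE.trans (connectedComponentIn_subset _ _))
      (compl_subset_compl.mpr hKK')
  have hAE : A ⊆ connectedComponentIn Kᶜ x := connectedComponentIn_mono x <| compl_sdiff ▸
    union_subset ((interior_subset.trans hLcE).trans (connectedComponentIn_subset _ _)) hK'K
  exact fun y hy => closure_connectedComponentIn_inter_subset hK.isOpen_compl x
    ⟨closure_mono hAE hy, hAK hy⟩

/-- A component of `Kᶜ` missing `frontier L` but leaving `L` would lie in `(closure L)ᶜ`, hence
contain its closure, hence be clopen: impossible in a connected space with `K` nonempty. -/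
theorem connectedComponentIn_compl_subset_of_disjoint_frontier [ConnectedSpace X]
    [LocallyConnectedSpace X] {K L : Set X} (hK : IsClosed K) (hKne : K.Nonempty)
    (hKL : K ⊆ interior L) {y : X} (hy : Disjoint (connectedComponentIn Kᶜ y) (frontier L)) :
    connectedComponentIn Kᶜ y ⊆ L := by
  set C := connectedComponentIn Kᶜ y
  have hC : C ⊆ interior L ∪ (closure L)ᶜ := fun z hz => by
    by_contra h
    simp only [mem_union, mem_compl_iff, not_or, not_not] at h
    exact hy.notMem_of_mem_left hz ⟨h.2, h.1⟩
  rcases isPreconnected_connectedComponentIn.subset_or_subset isOpen_interior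
    isClosed_closure.isOpen_compl (disjoint_compl_right.mono_left interior_subset_closure) hC
    with hCL | hCL
  · exact hCL.trans interior_subset
  have hclosure : closure C ⊆ Kᶜ := calc
    closure C ⊆ closure (closure L)ᶜ := closure_mono hCL
    _ = (interior (closure L))ᶜ := closure_compl
    _ ⊆ (interior L)ᶜ := compl_subset_compl.mpr (interior_mono subset_closure)
    _ ⊆ Kᶜ := compl_subset_compl.mpr hKL
  have hCclosed : IsClosed C := closure_subset_iff_isClosed.mp fun z hz =>
    closure_connectedComponentIn_inter_subset hK.isOpen_compl y ⟨hz, hclosure hz⟩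
  rcases C.eq_empty_or_nonempty with hCe | hCne
  · exact hCe ▸ empty_subset L
  obtain ⟨k, hk⟩ := hKne
  have hCuniv : C = univ :=
    IsClopen.eq_univ ⟨hCclosed, hK.isOpen_compl.connectedComponentIn⟩ hCne
  exact absurd hk (connectedComponentIn_subset Kᶜ y (show k ∈ C from hCuniv ▸ mem_univ k))

theorem IsCompact.exists_compl_subset_union_finite_connectedComponentIn [ConnectedSpace X]
    [LocallyConnectedSpace X] [WeaklyLocallyCompactSpace X] [T2Space X] {K : Set X}
    (hK : IsCompact K) (hKne : K.Nonempty) :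
    ∃ L, IsCompact L ∧ ∃ T : Set X, T.Finite ∧ Kᶜ ⊆ L ∪ ⋃ t ∈ T, connectedComponentIn Kᶜ t := by
  obtain ⟨L, hL, hKL⟩ := exists_compact_superset hK
  have hfrontier : frontier L ⊆ Kᶜ := fun z hz hzK => hz.2 (hKL hzK)
  have hfrontier_compact : IsCompact (frontier L) :=
    hL.closure.of_isClosed_subset isClosed_frontier frontier_subset_closure
  obtain ⟨T, -, hT, hcover⟩ := hfrontier_compact.elim_finite_subcover_image
      (fun _ _ => hK.isClosed.isOpen_compl.connectedComponentIn)
      fun z hz => mem_biUnion hz (mem_connectedComponentIn (hfrontier hz))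
  refine ⟨L, hL, T, hT, fun y hy => ?_⟩
  by_cases hyL : connectedComponentIn Kᶜ y ⊆ L
  · exact Or.inl (hyL (mem_connectedComponentIn hy))
  obtain ⟨z, hzy, hzL⟩ := not_disjoint_iff.mp fun h =>
    hyL (connectedComponentIn_compl_subset_of_disjoint_frontier hK.isClosed hKne hKL h)
  obtain ⟨t, ht, hzt⟩ := mem_iUnion₂.mp (hcover hzL)
  refine Or.inr (mem_iUnion₂.mpr ⟨t, ht, ?_⟩)
  rw [connectedComponentIn_eq hzt, ← connectedComponentIn_eq hzy]
  exact mem_connectedComponentIn hy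

theorem IsPathConnected.exists_isCompact_isPreconnected_superset {U T : Set X}
    (hU : IsPathConnected U) (hT : T.Finite) (hTU : T ⊆ U) :
    ∃ P, IsCompact P ∧ IsPreconnected P ∧ T ⊆ P ∧ P ⊆ U := by
  obtain ⟨x, hx⟩ := hU.nonempty
  have hjoin : ∀ t ∈ U, ∃ Q, IsCompact Q ∧ IsPreconnected Q ∧ x ∈ Q ∧ t ∈ Q ∧ Q ⊆ U :=
    fun t ht => let γ := (hU.joinedIn x hx t ht).somePath
      ⟨range γ, isCompact_range γ.continuous, isPreconnected_range γ.continuous,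
        ⟨0, γ.source⟩, ⟨1, γ.target⟩, range_subset_iff.mpr (JoinedIn.somePath_mem _)⟩
  choose! Q hQ using hjoin
  refine ⟨⋃ t ∈ T, Q t, hT.isCompact_biUnion fun t ht => (hQ t (hTU ht)).1, ?_,
    fun t ht => mem_biUnion ht (hQ t (hTU ht)).2.2.2.1,
    iUnion₂_subset fun t ht => (hQ t (hTU ht)).2.2.2.2⟩
  refine isPreconnected_of_forall x fun y hy => ?_
  obtain ⟨t, ht, hyt⟩ := mem_iUnion₂.mp hy
  exact ⟨Q t, subset_biUnion_of_mem ht, (hQ t (hTU ht)).2.2.1, hyt, (hQ t (hTU ht)).2.1⟩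

theorem IsCompact.exists_isCompact_closure_connectedComponentIn_compl_subset [ConnectedSpace X]
    [LocallyCompactSpace X] [LocallyPathConnectedSpace X] [T2Space X] {K : Set X}
    (hK : IsCompact K) {x : X} (hx : x ∈ Kᶜ) :
    ∃ L, IsCompact L ∧ x ∈ Lᶜ ∧
      closure (connectedComponentIn Lᶜ x) ⊆ connectedComponentIn Kᶜ x ∧
      ∃ C, IsCompact C ∧ connectedComponentIn Kᶜ x \ connectedComponentIn Lᶜ x ⊆ C := by
  obtain ⟨K', hK', hxKK'⟩ := exists_compact_superset (hK.insert x)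
  have hxK' : x ∈ K' := interior_subset (hxKK' (mem_insert x K))
  have hKK' : K ⊆ interior K' := (subset_insert x K).trans hxKK'
  have hK'K : K'ᶜ ⊆ Kᶜ := compl_subset_compl.mpr (hKK'.trans interior_subset)
  obtain ⟨L, hL, T, hT, hcover⟩ :=
    hK'.exists_compl_subset_union_finite_connectedComponentIn ⟨x, hxK'⟩
  set E := connectedComponentIn Kᶜ x
  have hEopen : IsOpen E := hK.isClosed.isOpen_compl.connectedComponentIn
  have hEpath : IsPathConnected E :=
    hEopen.isConnected_iff_isPathConnected.mp (isConnected_connectedComponentIn_iff.mpr hx)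
  obtain ⟨P, hP, hPconn, hxTP, hPE⟩ := hEpath.exists_isCompact_isPreconnected_superset
    ((hT.inter_of_left E).insert x) (insert_subset (mem_connectedComponentIn hx) inter_subset_right)
  obtain ⟨Lc, hLc, hPLc, hLcE⟩ := exists_compact_between hP hEopen hPE
  set A := connectedComponentIn (K' \ interior Lc)ᶜ x
  have hPA : P ⊆ A := hPconn.subset_connectedComponentIn (hxTP (mem_insert x _))
    (compl_sdiff ▸ hPLc.trans subset_union_left)
  refine ⟨K' \ interior Lc, hK'.diff isOpen_interior, fun h => h.2 (hPLc (hxTP (mem_insert x _))),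
    ?_, K' ∪ L, hK'.union hL, ?_⟩
  · exact closure_connectedComponentIn_compl_sdiff_subset hK.isClosed hKK' hLc.isClosed hLcE
  · rintro y ⟨hyE, hyA⟩
    by_contra hy
    obtain hyL | hyT := hcover fun h => hy (Or.inl h)
    · exact hy (Or.inr hyL)
    obtain ⟨t, ht, hyt⟩ := mem_iUnion₂.mp hyT
    have htK' : t ∈ K'ᶜ := connectedComponentIn_nonempty_iff.mp ⟨y, hyt⟩
    have htE : connectedComponentIn K'ᶜ t ⊆ E :=
      connectedComponentIn_eq hyt ▸ connectedComponentIn_subset_of_mem hK'K hyE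
    have htA : t ∈ A := hPA (hxTP (Or.inr ⟨ht, htE (mem_connectedComponentIn htK')⟩))
    exact hyA (connectedComponentIn_subset_of_mem (compl_subset_compl.mpr sdiff_subset) htA hyt)

end

theorem exists_end_with_closure_subset_general
    {n : ℕ} {M : Type*} [TopologicalSpace M]
    [ChartedSpace (EuclideanSpace ℝ (Fin n)) M]
    [T2Space M] [ConnectedSpace M]
    (E : Set M) (hE : IsEnd E) :
    ∃ A₀ : Set M, IsEnd A₀ ∧ closure A₀ ⊆ E ∧ IsCompact (closure (E \ A₀)) := by
  have := ChartedSpace.locallyCompactSpace (EuclideanSpace ℝ (Fin n)) M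
  have := ChartedSpace.locallyPathConnectedSpace (EuclideanSpace ℝ (Fin n)) M
  obtain ⟨K, hK, ⟨x, hx, rfl⟩, hEnc⟩ := hE
  obtain ⟨L, hL, hxL, hclosure, C, hC, hdiff⟩ :=
    hK.exists_isCompact_closure_connectedComponentIn_compl_subset hx
  refine ⟨_, ⟨L, hL, ⟨x, hxL, rfl⟩, fun hA => hEnc ?_⟩, hclosure, hC.closure_of_subset hdiff⟩
  refine (hC.union hA).closure_of_subset fun y hy => ?_
  by_cases hyA : y ∈ connectedComponentIn Lᶜ x
  · exact Or.inr (subset_closure hyA)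
  · exact Or.inl (hdiff ⟨hy, hyA⟩)

/-- If `E` is an end of `M`, then there is an end `A₀` with `closure A₀ ⊆ E` and
`E \ A₀` relatively compact in `M`. -/
theorem exists_end_with_closure_subset
    {n : ℕ} {M : Type*} [TopologicalSpace M]
    [ChartedSpace (EuclideanSpace ℝ (Fin n)) M]
    [IsManifold (modelWithCornersSelf ℝ (EuclideanSpace ℝ (Fin n))) (⊤ : ℕ∞) M]
    [T2Space M] [SecondCountableTopology M] [ConnectedSpace M] [NoncompactSpace M]
    (E : Set M) (hE : IsEnd E) :
    ∃ A₀ : Set M, IsEnd A₀ ∧ closure A₀ ⊆ E ∧ IsCompact (closure (E \ A₀)) :=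
  exists_end_with_closure_subset_general (n := n) E hE
end

section
/- Let n ≥ 2, let A be an n×n positive semidefinite Hermitian complex matrix (so its diagonal entries A_{jj} are real and nonnegative), and let λ_1,…,λ_n be nonnegative real numbers. Then ∑_{j,k,l pairwise distinct} λ_j² |A_{kl}|² + ∑_{j<k} (λ_j A_{kk} + λ_k A_{jj})² ≤ ( ∑_{j<k} (λ_j A_{kk} + λ_k A_{jj}) )², where the first sum is over triples (j,k,l) of pairwise distinct indices in {1,…,n} and the remaining sums are over pairs j < k in {1,…,n}. -/
/-!
Write `d k = A k k` and `c j = ∑_{k ≠ j} d k`. Splitting each pair term `λ_j d_k + λ_k d_j`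
into its two ordered halves, the pair sum is `∑_j λ_j c_j`, and the right-hand side minus the sum
of squares becomes a sum over ordered pairs `j ≠ k` of
`λ_j² d_k (c_j - d_k) + λ_j λ_k (c_j c_k - d_j d_k)`.
The first part dominates the triple sum because `|A k m|² ≤ d_k d_m`; the second is nonnegative
because `d_k ≤ c_j` and `d_j ≤ c_k`.
-/

open Finset
open scoped ComplexOrder

lemma Finset.sum_sq_eq_sum_add_sum_compl {ι R : Type*} [Fintype ι] [DecidableEq ι]
    [CommSemiring R] (a : ι → R) :
    (∑ i, a i) ^ 2 = ∑ i, (a i * a i + ∑ j ∈ {i}ᶜ, a i * a j) := by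
  rw [sq, sum_mul_sum]
  exact sum_congr rfl fun i _ => Fintype.sum_eq_add_sum_compl i _

namespace Matrix.PosSemidef

variable {ι 𝕜 : Type*} [RCLike 𝕜] {A : Matrix ι ι 𝕜}

lemma re_apply_self_nonneg (hA : A.PosSemidef) (i : ι) : 0 ≤ RCLike.re (A i i) :=
  (RCLike.nonneg_iff.mp hA.diag_nonneg).1

variable [Fintype ι] [DecidableEq ι]

lemma norm_apply_sq_le (hA : A.PosSemidef) (i j : ι) :
    ‖A i j‖ ^ 2 ≤ RCLike.re (A i i) * RCLike.re (A j j) := by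
  let _ := A.toSeminormedAddCommGroup hA
  let _ := A.toInnerProductSpace hA
  have hinner (a b : ι) : inner 𝕜 (Pi.single a 1 : ι → 𝕜) (Pi.single b 1) = A a b := by
    change (A *ᵥ Pi.single b 1) ⬝ᵥ star (Pi.single a 1) = A a b
    simp
  have hsymm : ‖A j i‖ = ‖A i j‖ := by rw [← hA.isHermitian.apply i j, norm_star]
  simpa only [hinner, hsymm, ← sq] using
    inner_mul_inner_self_le (𝕜 := 𝕜) (Pi.single i 1 : ι → 𝕜) (Pi.single j 1)

lemma sum_erase_norm_apply_sq_le (hA : A.PosSemidef) {s : Finset ι} {i : ι} (hi : i ∈ s) :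
    ∑ j ∈ s.erase i, ‖A i j‖ ^ 2
      ≤ RCLike.re (A i i) * (∑ j ∈ s, RCLike.re (A j j) - RCLike.re (A i i)) := by
  rw [← sum_erase_eq_sub hi, mul_sum]
  exact sum_le_sum fun j _ => hA.norm_apply_sq_le i j


lemma sum_sq_le_sq_sum_compl (hA : A.PosSemidef) (l : ι → ℝ) (hl : ∀ j, 0 ≤ l j) :
    ∑ j, ∑ k ∈ {j}ᶜ, (∑ m ∈ ({j}ᶜ : Finset ι).erase k, l j ^ 2 * ‖A k m‖ ^ 2
        + (l j ^ 2 * RCLike.re (A k k) ^ 2 + l j * l k * (RCLike.re (A j j) * RCLike.re (A k k))))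
      ≤ (∑ j, l j * ∑ k ∈ {j}ᶜ, RCLike.re (A k k)) ^ 2 := by
  set d : ι → ℝ := fun k => RCLike.re (A k k)
  set c : ι → ℝ := fun j => ∑ k ∈ {j}ᶜ, d k
  have hd (k : ι) : 0 ≤ d k := hA.re_apply_self_nonneg k
  have hdc {j k : ι} (hk : k ∈ ({j}ᶜ : Finset ι)) : d k ≤ c j :=
    single_le_sum (fun i _ => hd i) hk
  change _ ≤ (∑ j, l j * c j) ^ 2
  rw [sum_sq_eq_sum_add_sum_compl]
  refine sum_le_sum fun j _ => ?_
  calc _ ≤ ∑ k ∈ {j}ᶜ, (l j ^ 2 * c j * d k + l j * c j * (l k * c k)) := by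
        refine sum_le_sum fun k hk => ?_
        have hkj : j ∈ ({k}ᶜ : Finset ι) := by simpa [eq_comm] using hk
        have hoff : ∑ m ∈ ({j}ᶜ : Finset ι).erase k, ‖A k m‖ ^ 2 ≤ d k * (c j - d k) :=
          hA.sum_erase_norm_apply_sq_le hk
        have hdd : d j * d k ≤ c k * c j :=
          mul_le_mul (hdc hkj) (hdc hk) (hd k) ((hd j).trans (hdc hkj))
        rw [← mul_sum]
        linarith [mul_le_mul_of_nonneg_left hoff (sq_nonneg (l j)),
          mul_le_mul_of_nonneg_left hdd (mul_nonneg (hl j) (hl k))]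
    _ = l j * c j * (l j * c j) + ∑ k ∈ {j}ᶜ, l j * c j * (l k * c k) := by
        rw [sum_add_distrib, ← mul_sum]
        ring

end Matrix.PosSemidef

theorem posSemidef_sum_sq_le_sq_sum_general {n : ℕ}
    (A : Matrix (Fin n) (Fin n) ℂ) (hA : A.PosSemidef)
    (l : Fin n → ℝ) (hl : ∀ j, 0 ≤ l j) :
    (∑ j, ∑ k ∈ univ.erase j, ∑ m ∈ (univ.erase j).erase k,
        (l j) ^ 2 * ‖A k m‖ ^ 2)
      + ∑ j, ∑ k ∈ Ioi j, (l j * (A k k).re + l k * (A j j).re) ^ 2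
    ≤ (∑ j, ∑ k ∈ Ioi j, (l j * (A k k).re + l k * (A j j).re)) ^ 2 := by
  have hsum : ∑ j, ∑ k ∈ Ioi j, (l j * (A k k).re + l k * (A j j).re)
      = ∑ j, l j * ∑ k ∈ {j}ᶜ, (A k k).re := by
    simp only [mul_sum]
    exact sum_sum_Ioi_add_eq_sum_sum_off_diag fun k j => l j * (A k k).re
  have hsq : ∑ j, ∑ k ∈ Ioi j, (l j * (A k k).re + l k * (A j j).re) ^ 2
      = ∑ j, ∑ k ∈ {j}ᶜ, (l j ^ 2 * (A k k).re ^ 2 + l j * l k * ((A j j).re * (A k k).re)) := by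
    rw [← sum_sum_Ioi_add_eq_sum_sum_off_diag]
    exact sum_congr rfl fun j _ => sum_congr rfl fun k _ => by ring
  rw [hsum, hsq]
  simp only [← compl_singleton, ← sum_add_distrib]
  exact hA.sum_sq_le_sq_sum_compl l hl

/-- For an `n×n` positive semidefinite Hermitian matrix `A` and nonnegative reals
`λ_1,…,λ_n`:
`∑_{j,k,l distinct} λ_j²|A_{kl}|² + ∑_{j<k} (λ_j A_{kk} + λ_k A_{jj})²
  ≤ (∑_{j<k} (λ_j A_{kk} + λ_k A_{jj}))²`. -/
theorem posSemidef_sum_sq_le_sq_sum {n : ℕ} (hn : 2 ≤ n)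
    (A : Matrix (Fin n) (Fin n) ℂ) (hA : A.PosSemidef)
    (l : Fin n → ℝ) (hl : ∀ j, 0 ≤ l j) :
    (∑ j, ∑ k ∈ univ.erase j, ∑ m ∈ (univ.erase j).erase k,
        (l j) ^ 2 * ‖A k m‖ ^ 2)
      + ∑ j, ∑ k ∈ Ioi j, (l j * (A k k).re + l k * (A j j).re) ^ 2
    ≤ (∑ j, ∑ k ∈ Ioi j, (l j * (A k k).re + l k * (A j j).re)) ^ 2 :=
  posSemidef_sum_sq_le_sq_sum_general A hA l hl
end
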